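/- Let f: ℝ^n → ℝ have L₂-Lipschitz Hessian, M ≥ L₂, and let h* be a global minimizer of the coordinate-restricted cubic model at x (as in SSCN). Then −λ_min(∇²f(x + h*)) ≤ (3M/2)‖h*‖ + ‖∇²f(x) − ∇²f(x)_[S]‖. -/

import Mathlib

open scoped RealInnerProductSpace

/-- Zero out the coordinates of `v` outside `S`. -/
noncomputable def restrict {n : ℕ} (S : Finset (Fin n)) (v : EuclideanSpace ℝ (Fin n)) :
    EuclideanSpace ℝ (Fin n) := WithLp.toLp 2 (fun i => if i ∈ S then v i else 0)

/-- Zero out the entries of the matrix `A` whose row or column index is outside `S`. -/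
noncomputable def restrictM {n : ℕ} (S : Finset (Fin n)) (A : Matrix (Fin n) (Fin n) ℝ) :
    Matrix (Fin n) (Fin n) ℝ := fun i j => if i ∈ S ∧ j ∈ S then A i j else 0

/-- The Hessian matrix of `f` at `x`. -/
noncomputable def hessMat {n : ℕ} (f : EuclideanSpace ℝ (Fin n) → ℝ)
    (x : EuclideanSpace ℝ (Fin n)) : Matrix (Fin n) (Fin n) ℝ :=
  fun i j => (fderiv ℝ (fun z => fderiv ℝ f z) x (EuclideanSpace.single i 1))
      (EuclideanSpace.single j 1)

/-!
Let `v` be a unit eigenvector of `∇²f(x + h*)` for `λ`, so `λ = ⟨v, ∇²f(x + h*) v⟩`. The Lipschitz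
bound on the Hessian moves this to `⟨v, ∇²f(x) v⟩` at cost `L₂‖h*‖ ≤ M‖h*‖`, and splitting off
`∇²f(x) − ∇²f(x)_[S]` costs its operator norm. What remains is `⟨v, ∇²f(x)_[S] v⟩`, bounded below
by `−(M/2)‖h*‖` through the second-order optimality condition `∇²f(x)_[S] + (M/2)‖h*‖ I ⪰ 0` of
the cubic model on vectors supported on `S`.

That condition comes from comparing the model at `h*` with its values on lines `h* + t u`: with
`r = ‖h*‖` and `s = ‖h* + t u‖`, the increment is a linear term, plus `t²/2` times the quadratic
form of `∇²f(x)_[S] + (M/2) r I` at `u`, plus `(M/12)(s − r)²(2s + r)`. The last term is `o(t)`,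
which kills the linear term, and it vanishes at the reflection of `h*` (where `s = r`); continuity
in `t` covers the case `u ⊥ h*`, where the reflection is `h*` itself.
-/

theorem eq_zero_of_forall_nonneg_mul_add_sq_mul {a : ℝ} {R : ℝ → ℝ} (hR : Continuous R)
    (h : ∀ t, 0 ≤ a * t + t ^ 2 * R t) : a = 0 := by
  have hF : Continuous fun t => a + t * R t := by fun_prop
  have hdiv : ∀ t, 0 ≤ t * (a + t * R t) := fun t => by linarith [h t]
  have hpos : 0 ≤ a + 0 * R 0 :=
    le_on_closure (s := Set.Ioi 0) (fun t ht => nonneg_of_mul_nonneg_right (hdiv t) ht)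
      continuous_const.continuousOn hF.continuousOn (by simp)
  have hneg : a + 0 * R 0 ≤ 0 :=
    le_on_closure (s := Set.Iio 0) (fun t ht => nonpos_of_mul_nonneg_right (hdiv t) ht)
      hF.continuousOn continuous_const.continuousOn (by simp)
  simp only [zero_mul, add_zero] at hpos hneg
  exact le_antisymm hneg hpos

theorem nonneg_of_forall_sq_mul_nonneg {R : ℝ → ℝ} (hR : Continuous R)
    (h : ∀ t, 0 ≤ t ^ 2 * R t) (t : ℝ) : 0 ≤ R t :=
  (dense_compl_singleton 0).induction (P := fun t => 0 ≤ R t)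
    (fun s hs => nonneg_of_mul_nonneg_right (h s) (sq_pos_of_ne_zero hs))
    (isClosed_le continuous_const hR) t

theorem sub_sq_mul_two_mul_add_le {r s : ℝ} (hr : 0 ≤ r) (hs : 0 ≤ s) :
    (s - r) ^ 2 * (2 * s + r) ≤ 2 * |s - r| * |s ^ 2 - r ^ 2| := by
  rw [show s ^ 2 - r ^ 2 = (s - r) * (s + r) by ring, abs_mul, abs_of_nonneg (add_nonneg hs hr)]
  nlinarith [sq_abs (s - r), sq_nonneg (s - r)]

section InnerProductSpace

variable {E : Type*} [NormedAddCommGroup E] [InnerProductSpace ℝ E]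

theorem abs_inner_apply_self_le (T : E →L[ℝ] E) (v : E) : |⟪v, T v⟫| ≤ ‖T‖ * ‖v‖ ^ 2 :=
  (abs_real_inner_le_norm v (T v)).trans <| by
    nlinarith [T.le_opNorm v, norm_nonneg v]

noncomputable def cubicModel (g : E) (T : E →L[ℝ] E) (M : ℝ) (h : E) : ℝ :=
  ⟪g, h⟫ + 1 / 2 * ⟪T h, h⟫ + M / 6 * ‖h‖ ^ 3

theorem cubicModel_add_sub (g : E) (T : E →L[ℝ] E) (M : ℝ) (h w : E) :
    cubicModel g T M (h + w) - cubicModel g T M h =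
      (⟪g, w⟫ + 1 / 2 * (⟪T h, w⟫ + ⟪T w, h⟫) + M / 2 * ‖h‖ * ⟪h, w⟫)
        + 1 / 2 * (⟪T w, w⟫ + M / 2 * ‖h‖ * ‖w‖ ^ 2)
        + M / 12 * ((‖h + w‖ - ‖h‖) ^ 2 * (2 * ‖h + w‖ + ‖h‖)) := by
  simp only [cubicModel, map_add, inner_add_left, inner_add_right]
  linear_combination (M / 4 * ‖h‖) * norm_add_sq_real h w

theorem cubicModel_add_smul_sub_le (g : E) (T : E →L[ℝ] E) (M : ℝ) (h u : E) (t : ℝ) :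
    cubicModel g T M (h + t • u) - cubicModel g T M h ≤
      (⟪g, u⟫ + 1 / 2 * (⟪T h, u⟫ + ⟪T u, h⟫) + M / 2 * ‖h‖ * ⟪h, u⟫) * t
        + t ^ 2 * (1 / 2 * (⟪T u, u⟫ + M / 2 * ‖h‖ * ‖u‖ ^ 2)
          + |M| / 6 * ‖u‖ * |2 * ⟪h, u⟫ + t * ‖u‖ ^ 2|) := by
  have hdist : |‖h + t • u‖ - ‖h‖| ≤ |t| * ‖u‖ := by
    simpa [norm_smul] using abs_norm_sub_norm_le (h + t • u) h
  have hsq : ‖h + t • u‖ ^ 2 - ‖h‖ ^ 2 = t * (2 * ⟪h, u⟫ + t * ‖u‖ ^ 2) := by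
    rw [norm_add_sq_real, inner_smul_right, norm_smul, mul_pow, Real.norm_eq_abs, sq_abs]
    ring
  have hrem : M / 12 * ((‖h + t • u‖ - ‖h‖) ^ 2 * (2 * ‖h + t • u‖ + ‖h‖)) ≤
      t ^ 2 * (|M| / 6 * ‖u‖ * |2 * ⟪h, u⟫ + t * ‖u‖ ^ 2|) := by
    have hE := sub_sq_mul_two_mul_add_le (norm_nonneg h) (norm_nonneg (h + t • u))
    rw [hsq, abs_mul] at hE
    calc M / 12 * ((‖h + t • u‖ - ‖h‖) ^ 2 * (2 * ‖h + t • u‖ + ‖h‖))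
        ≤ |M| / 12 * ((‖h + t • u‖ - ‖h‖) ^ 2 * (2 * ‖h + t • u‖ + ‖h‖)) := by
          gcongr
          exact le_abs_self M
      _ ≤ |M| / 12 * (2 * (|t| * ‖u‖) * (|t| * |2 * ⟪h, u⟫ + t * ‖u‖ ^ 2|)) := by
          gcongr _ * ?_
          exact hE.trans (by gcongr)
      _ = t ^ 2 * (|M| / 6 * ‖u‖ * |2 * ⟪h, u⟫ + t * ‖u‖ ^ 2|) := by
          rw [← sq_abs t]; ring
  rw [cubicModel_add_sub]
  simp only [map_smul, inner_smul_left, inner_smul_right, norm_smul,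
    Real.norm_eq_abs, RCLike.conj_to_real, mul_pow, sq_abs] at hrem ⊢
  linarith [hrem]

variable {K : Submodule ℝ E} {g h u : E} {T : E →L[ℝ] E} {M : ℝ}

theorem IsMinOn.cubicModel_stationary (hmin : IsMinOn (cubicModel g T M) K h) (hh : h ∈ K)
    (hu : u ∈ K) :
    ⟪g, u⟫ + 1 / 2 * (⟪T h, u⟫ + ⟪T u, h⟫) + M / 2 * ‖h‖ * ⟪h, u⟫ = 0 := by
  refine eq_zero_of_forall_nonneg_mul_add_sq_mul (R := fun t => 1 / 2 * (⟪T u, u⟫ +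
    M / 2 * ‖h‖ * ‖u‖ ^ 2) + |M| / 6 * ‖u‖ * |2 * ⟪h, u⟫ + t * ‖u‖ ^ 2|) (by fun_prop) fun t => ?_
  have hle := isMinOn_iff.mp hmin (h + t • u) (K.add_mem hh (K.smul_mem t hu))
  linarith [cubicModel_add_smul_sub_le g T M h u t]

theorem IsMinOn.cubicModel_second_order (hmin : IsMinOn (cubicModel g T M) K h) (hh : h ∈ K)
    (hu : u ∈ K) : 0 ≤ ⟪T u, u⟫ + M / 2 * ‖h‖ * ‖u‖ ^ 2 := by
  have hR := nonneg_of_forall_sq_mul_nonneg (R := fun t => 1 / 2 * (⟪T u, u⟫ +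
    M / 2 * ‖h‖ * ‖u‖ ^ 2) + |M| / 6 * ‖u‖ * |2 * ⟪h, u⟫ + t * ‖u‖ ^ 2|) (by fun_prop)
    (fun t => ?_) (-2 * ⟪h, u⟫ / ‖u‖ ^ 2)
  · -- at this `t`, `h + t • u` is the reflection of `h` in `u⊥`, so the cubic remainder vanishes
    have hzero : |M| / 6 * ‖u‖ * |2 * ⟪h, u⟫ + -2 * ⟪h, u⟫ / ‖u‖ ^ 2 * ‖u‖ ^ 2| = 0 := by
      rcases eq_or_ne ‖u‖ 0 with hu0 | hu0
      · simp [hu0]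
      · field_simp; simp
    linarith [hzero]
  · have hle := isMinOn_iff.mp hmin (h + t • u) (K.add_mem hh (K.smul_mem t hu))
    have hle' := cubicModel_add_smul_sub_le g T M h u t
    rw [hmin.cubicModel_stationary hh hu, zero_mul, zero_add] at hle'
    linarith

end InnerProductSpace

section Coordinates

variable {n : ℕ}

theorem inner_toEuclideanCLM_hessMat (f : EuclideanSpace ℝ (Fin n) → ℝ)
    (y v w : EuclideanSpace ℝ (Fin n)) :
    ⟪v, Matrix.toEuclideanCLM (𝕜 := ℝ) (hessMat f y) w⟫ = fderiv ℝ (fderiv ℝ f) y v w := by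
  conv_rhs => rw [← (EuclideanSpace.basisFun (Fin n) ℝ).sum_repr v,
    ← (EuclideanSpace.basisFun (Fin n) ℝ).sum_repr w]
  simp only [Matrix.inner_toEuclideanCLM, dotProduct, Matrix.mulVec, hessMat, mul_comm,
    Finset.mul_sum, EuclideanSpace.basisFun_repr, EuclideanSpace.basisFun_apply, map_sum,
    map_smul, sum_apply, smul_apply, smul_eq_mul, mul_left_comm]
  exact Finset.sum_comm

theorem abs_inner_hessMat_sub_le (f : EuclideanSpace ℝ (Fin n) → ℝ)
    (x y v : EuclideanSpace ℝ (Fin n)) :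
    |⟪v, Matrix.toEuclideanCLM (𝕜 := ℝ) (hessMat f x) v⟫
        - ⟪v, Matrix.toEuclideanCLM (𝕜 := ℝ) (hessMat f y) v⟫|
      ≤ ‖fderiv ℝ (fderiv ℝ f) x - fderiv ℝ (fderiv ℝ f) y‖ * ‖v‖ ^ 2 := by
  rw [inner_toEuclideanCLM_hessMat, inner_toEuclideanCLM_hessMat, ← Real.norm_eq_abs]
  have := (fderiv ℝ (fderiv ℝ f) x - fderiv ℝ (fderiv ℝ f) y).le_opNorm₂ v v
  simpa [sq, mul_assoc] using this

def supportedOn (S : Finset (Fin n)) : Submodule ℝ (EuclideanSpace ℝ (Fin n)) where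
  carrier := {h | ∀ i ∉ S, h i = 0}
  add_mem' ha hb i hi := by simp [ha i hi, hb i hi]
  zero_mem' _ _ := rfl
  smul_mem' c h hh i hi := by simp [hh i hi]

theorem restrict_mem_supportedOn (S : Finset (Fin n)) (v : EuclideanSpace ℝ (Fin n)) :
    restrict S v ∈ supportedOn S := fun i hi => by simp [restrict, hi]

theorem norm_restrict_le (S : Finset (Fin n)) (v : EuclideanSpace ℝ (Fin n)) :
    ‖restrict S v‖ ≤ ‖v‖ := by
  rw [EuclideanSpace.norm_eq, EuclideanSpace.norm_eq]
  gcongr with i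
  by_cases hi : i ∈ S <;> simp [restrict, hi]

theorem inner_toEuclideanCLM_restrictM (S : Finset (Fin n)) (A : Matrix (Fin n) (Fin n) ℝ)
    (v : EuclideanSpace ℝ (Fin n)) :
    ⟪v, Matrix.toEuclideanCLM (𝕜 := ℝ) (restrictM S A) v⟫
      = ⟪restrict S v, Matrix.toEuclideanCLM (𝕜 := ℝ) (restrictM S A) (restrict S v)⟫ := by
  simp only [Matrix.inner_toEuclideanCLM, dotProduct, Matrix.mulVec, restrictM, restrict]
  refine Finset.sum_congr rfl fun i _ => ?_
  by_cases hi : i ∈ S <;> simp [hi]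

end Coordinates

theorem new_min_eigenvalue_bound_general {n : ℕ} (f : EuclideanSpace ℝ (Fin n) → ℝ) (L₂ M : ℝ)
    (hL₂ : 0 ≤ L₂) (hM : L₂ ≤ M)
    (hLip : ∀ x y : EuclideanSpace ℝ (Fin n),
      ‖fderiv ℝ (fun z => fderiv ℝ f z) x - fderiv ℝ (fun z => fderiv ℝ f z) y‖ ≤ L₂ * ‖x - y‖)
    (S : Finset (Fin n)) (x hs : EuclideanSpace ℝ (Fin n))
    (hsupp : ∀ i ∉ S, hs i = 0)
    (hmin : ∀ h : EuclideanSpace ℝ (Fin n), (∀ i ∉ S, h i = 0) →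
      ⟪restrict S (gradient f x), hs⟫
          + (1 / 2) * ⟪(Matrix.toEuclideanCLM (𝕜 := ℝ) (restrictM S (hessMat f x))) hs, hs⟫
          + (M / 6) * ‖hs‖ ^ 3
        ≤ ⟪restrict S (gradient f x), h⟫
          + (1 / 2) * ⟪(Matrix.toEuclideanCLM (𝕜 := ℝ) (restrictM S (hessMat f x))) h, h⟫
          + (M / 6) * ‖h‖ ^ 3)
    (hherm : (hessMat f (x + hs)).IsHermitian) :
    ∀ i, -(hherm.eigenvalues i)
      ≤ (3 * M / 2) * ‖hs‖
        + ‖Matrix.toEuclideanCLM (𝕜 := ℝ) (hessMat f x - restrictM S (hessMat f x))‖ := by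
  intro i
  set v : EuclideanSpace ℝ (Fin n) := hherm.eigenvectorBasis i
  have hv : ‖v‖ = 1 := hherm.eigenvectorBasis.orthonormal.1 i
  set A := hessMat f x
  have heig :
      hherm.eigenvalues i = ⟪v, Matrix.toEuclideanCLM (𝕜 := ℝ) (hessMat f (x + hs)) v⟫ := by
    rw [hherm.eigenvalues_eq, Matrix.inner_toEuclideanCLM]
    simp [v]
  have hlip : |⟪v, Matrix.toEuclideanCLM (𝕜 := ℝ) (hessMat f (x + hs)) v⟫
      - ⟪v, Matrix.toEuclideanCLM (𝕜 := ℝ) A v⟫| ≤ M * ‖hs‖ :=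
    calc _ ≤ ‖fderiv ℝ (fderiv ℝ f) (x + hs) - fderiv ℝ (fderiv ℝ f) x‖ * ‖v‖ ^ 2 :=
          abs_inner_hessMat_sub_le f (x + hs) x v
      _ ≤ L₂ * ‖hs‖ := by simpa [hv] using hLip (x + hs) x
      _ ≤ M * ‖hs‖ := by gcongr
  have hres : |⟪v, Matrix.toEuclideanCLM (𝕜 := ℝ) (A - restrictM S A) v⟫|
      ≤ ‖Matrix.toEuclideanCLM (𝕜 := ℝ) (A - restrictM S A)‖ := by
    simpa [hv] using abs_inner_apply_self_le (Matrix.toEuclideanCLM (𝕜 := ℝ) (A - restrictM S A)) v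
  have hsecond : -(M / 2 * ‖hs‖) ≤ ⟪v, Matrix.toEuclideanCLM (𝕜 := ℝ) (restrictM S A) v⟫ := by
    have h := IsMinOn.cubicModel_second_order (K := supportedOn S) (isMinOn_iff.mpr hmin) hsupp
      (restrict_mem_supportedOn S v)
    rw [real_inner_comm, ← inner_toEuclideanCLM_restrictM] at h
    have hPv : ‖restrict S v‖ ^ 2 ≤ 1 := by
      rw [sq_le_one_iff₀ (norm_nonneg _), ← hv]
      exact norm_restrict_le S v
    have hMr : 0 ≤ M / 2 * ‖hs‖ := by have := hL₂.trans hM; positivity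
    linarith [mul_le_mul_of_nonneg_left hPv hMr]
  have hsplit : ⟪v, Matrix.toEuclideanCLM (𝕜 := ℝ) A v⟫
      = ⟪v, Matrix.toEuclideanCLM (𝕜 := ℝ) (restrictM S A) v⟫
        + ⟪v, Matrix.toEuclideanCLM (𝕜 := ℝ) (A - restrictM S A) v⟫ := by
    rw [map_sub, sub_apply, inner_sub_right]; ring
  rw [abs_le] at hlip hres
  linarith

/-- Smallest-eigenvalue bound at the new iterate: if `h*` globally minimizes the
coordinate-restricted cubic model with `M ≥ L₂` over vectors supported on `S`, then every
eigenvalue `λ` of `∇²f(x + h*)` satisfies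
`−λ ≤ (3M/2)‖h*‖ + ‖∇²f(x) − ∇²f(x)_[S]‖`. -/
theorem new_min_eigenvalue_bound {n : ℕ} (f : EuclideanSpace ℝ (Fin n) → ℝ) (L₂ M : ℝ)
    (hL₂ : 0 ≤ L₂) (hM : L₂ ≤ M)
    (hf : ContDiff ℝ 2 f)
    (hLip : ∀ x y : EuclideanSpace ℝ (Fin n),
      ‖fderiv ℝ (fun z => fderiv ℝ f z) x - fderiv ℝ (fun z => fderiv ℝ f z) y‖ ≤ L₂ * ‖x - y‖)
    (S : Finset (Fin n)) (x hs : EuclideanSpace ℝ (Fin n))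
    (hsupp : ∀ i ∉ S, hs i = 0)
    (hmin : ∀ h : EuclideanSpace ℝ (Fin n), (∀ i ∉ S, h i = 0) →
      ⟪restrict S (gradient f x), hs⟫
          + (1 / 2) * ⟪(Matrix.toEuclideanCLM (𝕜 := ℝ) (restrictM S (hessMat f x))) hs, hs⟫
          + (M / 6) * ‖hs‖ ^ 3
        ≤ ⟪restrict S (gradient f x), h⟫
          + (1 / 2) * ⟪(Matrix.toEuclideanCLM (𝕜 := ℝ) (restrictM S (hessMat f x))) h, h⟫
          + (M / 6) * ‖h‖ ^ 3)
    (hherm : (hessMat f (x + hs)).IsHermitian) :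
    ∀ i, -(hherm.eigenvalues i)
      ≤ (3 * M / 2) * ‖hs‖
        + ‖Matrix.toEuclideanCLM (𝕜 := ℝ) (hessMat f x - restrictM S (hessMat f x))‖ :=
  new_min_eigenvalue_bound_general f L₂ M hL₂ hM hLip S x hs hsupp hmin hherm
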